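/- For the polytope Δ = conv{(2,1,−2), (2,0,1), (2,2,1), (−4,−2,1)}, the facet Δ_can contained in the plane {x₁ = 2} has exactly 2 interior lattice points (relative to that facet), and all other facets of Δ have integral distance 1 to the origin while Δ_can has integral distance 2. -/

import Mathlib

noncomputable section

def pairing {n : ℕ} (x : Fin n → ℝ) (ν : Fin n → ℤ) : ℝ := ∑ i, x i * (ν i : ℝ)

def IsLatticePoint {n : ℕ} (x : Fin n → ℝ) : Prop := ∀ i, ∃ z : ℤ, x i = (z : ℝ)

def IsPrimitiveZ {n : ℕ} (v : Fin n → ℤ) : Prop := Finset.univ.gcd v = 1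

/-- The polytope `Δ = conv{(2,1,−2), (2,0,1), (2,2,1), (−4,−2,1)} ⊂ ℝ³`. -/
def Δa : Set (Fin 3 → ℝ) :=
  convexHull ℝ {![2, 1, -2], ![2, 0, 1], ![2, 2, 1], ![-4, -2, 1]}

/-- The facet `Δ_can`, i.e. the part of `Δ` lying in the plane `{x₁ = 2}`. -/
def Δcan : Set (Fin 3 → ℝ) := Δa ∩ { x | x 0 = 2 }

/-- `(n, l)` cuts out a facet of `Δ`: the halfspace `⟨x,n⟩ ≥ l` contains `Δ`
and the hyperplane `⟨x,n⟩ = l` meets `Δ` in a 2-dimensional set (it contains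
three affinely independent points of `Δ`). -/
def IsFacetData (Δ : Set (Fin 3 → ℝ)) (n : Fin 3 → ℤ) (l : ℤ) : Prop :=
  (∀ x ∈ Δ, (l : ℝ) ≤ pairing x n) ∧
  ∃ u v w : Fin 3 → ℝ, u ∈ Δ ∧ v ∈ Δ ∧ w ∈ Δ ∧
    pairing u n = l ∧ pairing v n = l ∧ pairing w n = l ∧
    AffineIndependent ℝ ![u, v, w]


/-! A supporting plane `⟨x, n⟩ = l` of a polytope `conv V` meets it in `conv (V ∩ {⟨x, n⟩ = l})`:
in a convex combination attaining the minimum `l`, every point of positive weight attains it.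
So a facet of `Δ` contains three of its four vertices. If these are the vertices of `Δ_can`, then
`n = n₁ (1, 0, 0)` and `l = 2 n₁`; otherwise solving the three equations shows that `l` divides
every coordinate of `n`. Primitivity of `n` forces `|n₁| = 1`, resp. `|l| = 1`.

`Δ_can` is the image of the triangle `conv {(1, -2), (0, 1), (2, 1)}` under the isometric
embedding `p ↦ (2, p)`, so its relative interior is the image of the open triangle, whose only
lattice points are `(1, 0)` and `(1, -1)`. -/

open Set

section Pairing

variable {n : ℕ}

def pairingLinear (ν : Fin n → ℤ) : (Fin n → ℝ) →ₗ[ℝ] ℝ where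
  toFun x := pairing x ν
  map_add' x y := by simp only [pairing, Pi.add_apply, add_mul, Finset.sum_add_distrib]
  map_smul' c x := by
    simp only [pairing, Pi.smul_apply, smul_eq_mul, mul_assoc, Finset.mul_sum, RingHom.id_apply]

@[simp]
lemma pairingLinear_apply (ν : Fin n → ℤ) (x : Fin n → ℝ) : pairingLinear ν x = pairing x ν :=
  rfl

lemma pairing_single (i : Fin n) (ν : Fin n → ℤ) : pairing (Pi.single i 1) ν = ν i := by
  simp [pairing, Pi.single_apply]

lemma pairing_fin_two (x : Fin 2 → ℝ) (ν : Fin 2 → ℤ) :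
    pairing x ν = x 0 * ν 0 + x 1 * ν 1 := by
  simp [pairing]

lemma pairing_fin_three (x : Fin 3 → ℝ) (ν : Fin 3 → ℤ) :
    pairing x ν = x 0 * ν 0 + x 1 * ν 1 + x 2 * ν 2 := by
  simp [pairing, Fin.sum_univ_three]

lemma IsPrimitiveZ.natAbs_eq_one_of_dvd {ν : Fin n → ℤ} {k : ℤ} (h : IsPrimitiveZ ν)
    (hk : ∀ i, k ∣ ν i) : k.natAbs = 1 := by
  have hk₁ : k ∣ 1 := h ▸ Finset.dvd_gcd fun i _ => hk i
  exact Int.isUnit_iff_natAbs_eq.mp (isUnit_of_dvd_one hk₁)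

lemma interior_setOf_pairing_le {ν : Fin n → ℤ} (hν : ν ≠ 0) (c : ℝ) :
    interior {x | pairing x ν ≤ c} = {x | pairing x ν < c} := by
  obtain ⟨i, hi⟩ := Function.ne_iff.mp hν
  have hne : pairingLinear ν ≠ 0 := fun h => hi <| by
    simpa [pairing_single] using LinearMap.congr_fun h (Pi.single i 1)
  have := (LinearMap.toContinuousLinearMap (pairingLinear ν)).interior_preimage
    (LinearMap.surjective_of_ne_zero hne) (Iic c)
  rwa [interior_Iic] at this

end Pairing

lemma convexHull_inter_hyperplane_of_forall_le {E : Type*} [AddCommGroup E] [Module ℝ E]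
    (f : E →ₗ[ℝ] ℝ) {s : Set E} {l : ℝ} (hs : ∀ x ∈ s, l ≤ f x) :
    convexHull ℝ s ∩ {x | f x = l} = convexHull ℝ (s ∩ {x | f x = l}) := by
  refine subset_antisymm ?_ (subset_inter (convexHull_mono inter_subset_left)
    (convexHull_min inter_subset_right ((convex_singleton l).linear_preimage f)))
  rintro _ ⟨hx, hfx⟩
  obtain ⟨ι, _, w, z, hw₀, hw₁, hz, rfl⟩ := mem_convexHull_iff_exists_fintype.mp hx
  have hslack : ∑ i, w i * (f (z i) - l) = 0 := by
    simp only [mem_ofPred_eq, map_sum, map_smul, smul_eq_mul] at hfx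
    simp only [mul_sub, Finset.sum_sub_distrib, ← Finset.sum_mul, hfx, hw₁, one_mul, sub_self]
  have hzero := (Finset.sum_eq_zero_iff_of_nonneg fun i _ =>
    mul_nonneg (hw₀ i) (sub_nonneg.mpr (hs _ (hz i)))).mp hslack
  have hsupp : ∀ i ∈ Finset.univ, w i ≠ 0 → f (z i) = l := fun i hi hwi =>
    sub_eq_zero.mp ((mul_eq_zero.mp (hzero i hi)).resolve_left hwi)
  rw [← Finset.sum_filter_of_ne fun i hi hwi => hsupp i hi (left_ne_zero_of_smul hwi)]
  rw [← Finset.sum_filter_of_ne fun i hi hwi => hsupp i hi hwi] at hw₁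
  rw [← Finset.centerMass_eq_of_sum_1 _ _ hw₁]
  exact Finset.centerMass_mem_convexHull _ (fun i _ => hw₀ i) (hw₁ ▸ one_pos)
    fun i hi => ⟨hz i, (Finset.mem_filter.mp hi).2⟩

lemma intrinsicInterior_eq_interior_of_affineSpan_eq_top {E : Type*} [NormedAddCommGroup E]
    [NormedSpace ℝ E] {s : Set E} (h : affineSpan ℝ s = ⊤) :
    intrinsicInterior ℝ s = interior s := by
  refine subset_antisymm ?_ interior_subset_intrinsicInterior
  have hopen : IsOpen (affineSpan ℝ s : Set E) := by rw [h]; exact isOpen_univ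
  rintro _ ⟨y, hy, rfl⟩
  exact interior_mono (image_preimage_subset _ _)
    (hopen.isOpenMap_subtype_val.image_interior_subset _ ⟨y, hy, rfl⟩)

lemma norm_vecCons_zero {n : ℕ} (v : Fin n → ℝ) : ‖Matrix.vecCons (0 : ℝ) v‖ = ‖v‖ := by
  refine le_antisymm ((pi_norm_le_iff_of_nonneg (norm_nonneg v)).2 fun i => ?_)
    ((pi_norm_le_iff_of_nonneg (norm_nonneg _)).2 fun i => ?_)
  · refine Fin.cases ?_ (fun j => ?_) i
    · simp
    · simpa using norm_le_pi_norm v j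
  · simpa using norm_le_pi_norm (Matrix.vecCons (0 : ℝ) v) i.succ

def vecConsAffineIsometry {n : ℕ} (c : ℝ) : (Fin n → ℝ) →ᵃⁱ[ℝ] (Fin (n + 1) → ℝ) where
  toFun p := Matrix.vecCons c p
  linear := LinearMap.vecCons 0 LinearMap.id
  map_vadd' p v := by
    ext i
    refine Fin.cases ?_ (fun j => ?_) i <;> simp
  norm_map v := norm_vecCons_zero v

@[simp]
lemma vecConsAffineIsometry_apply {n : ℕ} (c : ℝ) (p : Fin n → ℝ) :
    vecConsAffineIsometry c p = Matrix.vecCons c p :=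
  rfl

section Facets

variable {ν : Fin 3 → ℤ} {l : ℤ}

lemma IsFacetData.not_subset_pair {s : Set (Fin 3 → ℝ)} (hf : IsFacetData (convexHull ℝ s) ν l)
    (p q : Fin 3 → ℝ) : ¬ s ∩ {x | pairing x ν = l} ⊆ {p, q} := by
  intro hpq
  obtain ⟨hsupp, u, v, w, hu, hv, hw, hpu, hpv, hpw, hind⟩ := hf
  have hface : convexHull ℝ s ∩ {x | pairing x ν = l} ⊆ line[ℝ, p, q] :=
    calc convexHull ℝ s ∩ {x | pairing x ν = l}
        = convexHull ℝ (s ∩ {x | pairing x ν = l}) :=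
          convexHull_inter_hyperplane_of_forall_le (pairingLinear ν)
            fun x hx => hsupp x (subset_convexHull ℝ s hx)
      _ ⊆ convexHull ℝ {p, q} := convexHull_mono hpq
      _ ⊆ line[ℝ, p, q] := convexHull_subset_affineSpan _
  exact affineIndependent_iff_not_collinear_set.mp hind
    (collinear_triple_of_mem_affineSpan_pair (hface ⟨hu, hpu⟩) (hface ⟨hv, hpv⟩) (hface ⟨hw, hpw⟩))

lemma IsFacetData.pairing_eq_of_pairing_ne {s : Set (Fin 3 → ℝ)} {a b c d : Fin 3 → ℝ}
    (hf : IsFacetData (convexHull ℝ s) ν l) (hs : s ⊆ {a, b, c, d}) (ha : pairing a ν ≠ l) :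
    pairing b ν = l ∧ pairing c ν = l ∧ pairing d ν = l := by
  refine ⟨?_, ?_, ?_⟩ <;> by_contra hne <;>
    [apply hf.not_subset_pair c d; apply hf.not_subset_pair b d; apply hf.not_subset_pair b c] <;>
    rintro x ⟨hx, hxl⟩ <;> rcases hs hx with rfl | rfl | rfl | rfl <;> simp_all

lemma IsFacetData.dvd_of_Δa (hf : IsFacetData Δa ν l) (hD : pairing ![-4, -2, 1] ν = l) :
    l ∣ ν 0 ∧ l ∣ ν 1 ∧ l ∣ ν 2 := by
  by_cases hA : pairing ![2, 1, -2] ν = l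
  · by_cases hB : pairing ![2, 0, 1] ν = l
    · simp only [pairing_fin_three, Matrix.cons_val] at hA hB hD
      norm_cast at hA hB hD
      exact ⟨⟨1, by omega⟩, ⟨-3, by omega⟩, ⟨-1, by omega⟩⟩
    · obtain ⟨-, hC, -⟩ := hf.pairing_eq_of_pairing_ne (a := ![2, 0, 1]) (b := ![2, 1, -2])
        (c := ![2, 2, 1]) (d := ![-4, -2, 1]) (by simp [insert_subset_iff]) hB
      simp only [pairing_fin_three, Matrix.cons_val] at hA hC hD
      norm_cast at hA hC hD
      exact ⟨⟨-2, by omega⟩, ⟨3, by omega⟩, ⟨-1, by omega⟩⟩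
  · obtain ⟨hB, hC, -⟩ := hf.pairing_eq_of_pairing_ne subset_rfl hA
    simp only [pairing_fin_three, Matrix.cons_val] at hB hC hD
    norm_cast at hB hC hD
    exact ⟨⟨0, by omega⟩, ⟨0, by omega⟩, ⟨1, by omega⟩⟩

lemma IsFacetData.eq_of_Δa (hf : IsFacetData Δa ν l) (hD : pairing ![-4, -2, 1] ν ≠ l) :
    ν 1 = 0 ∧ ν 2 = 0 ∧ l = 2 * ν 0 := by
  obtain ⟨hA, hB, hC⟩ := hf.pairing_eq_of_pairing_ne (a := ![-4, -2, 1]) (b := ![2, 1, -2])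
    (c := ![2, 0, 1]) (d := ![2, 2, 1]) (by simp [insert_subset_iff]) hD
  simp only [pairing_fin_three, Matrix.cons_val] at hA hB hC
  norm_cast at hA hB hC
  omega

lemma Δa_inter_eq_Δcan (h0 : ν 0 ≠ 0) (h1 : ν 1 = 0) (h2 : ν 2 = 0) (hl : l = 2 * ν 0) :
    Δa ∩ {x | pairing x ν = l} = Δcan := by
  have h0' : (ν 0 : ℝ) ≠ 0 := by exact_mod_cast h0
  ext x
  simp [Δcan, pairing_fin_three, h1, h2, hl, h0']

lemma IsFacetData.natAbs_Δa_cases (hprim : IsPrimitiveZ ν) (hf : IsFacetData Δa ν l) :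
    (Δa ∩ {x | pairing x ν = l} = Δcan ∧ l.natAbs = 2) ∨
      (Δa ∩ {x | pairing x ν = l} ≠ Δcan ∧ l.natAbs = 1) := by
  by_cases hD : pairing ![-4, -2, 1] ν = l
  · refine .inr ⟨fun hface => ?_, ?_⟩
    · have hDcan : ![-4, -2, 1] ∈ Δcan := hface ▸ ⟨subset_convexHull ℝ _ (by simp), hD⟩
      norm_num [Δcan] at hDcan
    · obtain ⟨h0, h1, h2⟩ := hf.dvd_of_Δa hD
      exact hprim.natAbs_eq_one_of_dvd fun i => by fin_cases i; exacts [h0, h1, h2]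
  · obtain ⟨h1, h2, hl⟩ := hf.eq_of_Δa hD
    have h0 : (ν 0).natAbs = 1 := hprim.natAbs_eq_one_of_dvd fun i => by
      fin_cases i; exacts [dvd_rfl, by simp [h1], by simp [h2]]
    exact .inl ⟨Δa_inter_eq_Δcan (by omega) h1 h2 hl, by omega⟩

end Facets

def triangle : Set (Fin 2 → ℝ) := convexHull ℝ {![1, -2], ![0, 1], ![2, 1]}

lemma triangle_eq :
    triangle =
      {p : Fin 2 → ℝ | pairing p ![0, 1] ≤ 1} ∩ {p | pairing p ![-3, -1] ≤ -1} ∩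
        {p | pairing p ![3, -1] ≤ 5} := by
  refine subset_antisymm (convexHull_min ?_ ?_) fun p hp => ?_
  · rintro _ (rfl | rfl | rfl) <;> norm_num [pairing_fin_two]
  · exact (((convex_Iic _).linear_preimage (pairingLinear _)).inter
      ((convex_Iic _).linear_preimage (pairingLinear _))).inter
      ((convex_Iic _).linear_preimage (pairingLinear _))
  · obtain ⟨⟨h1, h2⟩, h3⟩ := hp
    norm_num [pairing_fin_two] at h1 h2 h3
    refine mem_convexHull_of_exists_fintype
      ![(1 - p 1) / 3, (5 + p 1 - 3 * p 0) / 6, (3 * p 0 + p 1 - 1) / 6]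
      ![![1, -2], ![0, 1], ![2, 1]] (fun i => ?_) ?_ (fun i => ?_) ?_
    · fin_cases i <;> simp only [Fin.zero_eta, Fin.mk_one, Fin.reduceFinMk, Matrix.cons_val] <;>
        linarith
    · simp only [Fin.sum_univ_three, Matrix.cons_val]
      ring
    · fin_cases i <;> simp
    · ext i
      fin_cases i <;>
        simp only [Fin.zero_eta, Fin.mk_one, Fin.sum_univ_three, Finset.sum_apply, Pi.smul_apply,
          smul_eq_mul, Matrix.cons_val] <;>
        ring

lemma interior_triangle :
    interior triangle =
      {p : Fin 2 → ℝ | pairing p ![0, 1] < 1} ∩ {p | pairing p ![-3, -1] < -1} ∩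
        {p | pairing p ![3, -1] < 5} := by
  rw [triangle_eq, interior_inter, interior_inter,
    interior_setOf_pairing_le (by decide), interior_setOf_pairing_le (by decide),
    interior_setOf_pairing_le (by decide)]

lemma Δcan_eq_image_triangle :
    Δcan = vecConsAffineIsometry 2 '' triangle := by
  let f : (Fin 3 → ℝ) →ₗ[ℝ] ℝ := -LinearMap.proj 0
  have hΔcan : Δcan = Δa ∩ {x | f x = -2} := by
    ext x
    simp [Δcan, f]
  have hvertices : ({![2, 1, -2], ![2, 0, 1], ![2, 2, 1], ![-4, -2, 1]} : Set (Fin 3 → ℝ)) ∩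
      {x | f x = -2} = (vecConsAffineIsometry 2).toAffineMap '' {![1, -2], ![0, 1], ![2, 1]} := by
    ext x
    simp only [mem_inter_iff, mem_insert_iff, mem_singleton_iff, mem_ofPred_eq, image_insert_eq,
      image_singleton]
    constructor
    · rintro ⟨rfl | rfl | rfl | rfl, h⟩ <;> norm_num [f] at *
    · rintro (rfl | rfl | rfl) <;> norm_num [f]
  rw [hΔcan, Δa, convexHull_inter_hyperplane_of_forall_le f
    (by rintro _ (rfl | rfl | rfl | rfl) <;> norm_num [f]), hvertices, ← AffineMap.image_convexHull]
  rfl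

lemma intrinsicInterior_Δcan :
    intrinsicInterior ℝ Δcan = vecConsAffineIsometry 2 '' interior triangle := by
  have hspan : affineSpan ℝ triangle = ⊤ := by
    have hmem : ![1, 0] ∈ interior triangle := by
      rw [interior_triangle]
      norm_num [pairing_fin_two]
    exact (convex_convexHull ℝ _).interior_nonempty_iff_affineSpan_eq_top.mp ⟨_, hmem⟩
  rw [Δcan_eq_image_triangle, AffineIsometry.intrinsicInterior_image,
    intrinsicInterior_eq_interior_of_affineSpan_eq_top hspan]

lemma latticePoints_intrinsicInterior_Δcan :
    {m : Fin 3 → ℝ | IsLatticePoint m ∧ m ∈ intrinsicInterior ℝ Δcan} =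
      {![2, 1, 0], ![2, 1, -1]} := by
  rw [intrinsicInterior_Δcan, interior_triangle]
  ext m
  simp only [mem_ofPred_eq, mem_image, mem_inter_iff, vecConsAffineIsometry_apply,
    mem_insert_iff, mem_singleton_iff]
  constructor
  · rintro ⟨hm, p, ⟨⟨h1, h2⟩, h3⟩, rfl⟩
    obtain ⟨a, ha⟩ := hm 1
    obtain ⟨b, hb⟩ := hm 2
    obtain rfl : p = ![(a : ℝ), b] := by ext i; fin_cases i; exacts [ha, hb]
    simp only [pairing_fin_two, Matrix.cons_val_zero, Matrix.cons_val_one] at h1 h2 h3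
    norm_cast at h1 h2 h3
    obtain ⟨rfl, rfl | rfl⟩ : a = 1 ∧ (b = 0 ∨ b = -1) := by omega
    all_goals simp
  · rintro (rfl | rfl)
    · refine ⟨fun i => ?_, ![1, 0], by norm_num [pairing_fin_two], rfl⟩
      fin_cases i
      exacts [⟨2, by simp⟩, ⟨1, by simp⟩, ⟨0, by simp⟩]
    · refine ⟨fun i => ?_, ![1, -1], by norm_num [pairing_fin_two], rfl⟩
      fin_cases i
      exacts [⟨2, by simp⟩, ⟨1, by simp⟩, ⟨-1, by simp⟩]

/-- For `Δ = conv{(2,1,−2), (2,0,1), (2,2,1), (−4,−2,1)}`, the facet `Δ_can`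
in the plane `{x₁ = 2}` has exactly `2` interior lattice points (relative to
that facet), and all other facets of `Δ` have integral distance `1` to the
origin while `Δ_can` has integral distance `2`. -/
theorem classA_max_facet_distances :
    { m : Fin 3 → ℝ | IsLatticePoint m ∧ m ∈ intrinsicInterior ℝ Δcan }.ncard = 2 ∧
    ∀ (n : Fin 3 → ℤ) (l : ℤ), IsPrimitiveZ n → IsFacetData Δa n l →
      ((Δa ∩ { x | pairing x n = (l : ℝ) } = Δcan → l.natAbs = 2) ∧
       (Δa ∩ { x | pairing x n = (l : ℝ) } ≠ Δcan → l.natAbs = 1)) := by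
  refine ⟨?_, fun n l hprim hf => ?_⟩
  · rw [latticePoints_intrinsicInterior_Δcan]
    exact ncard_pair (by simp)
  rcases hf.natAbs_Δa_cases hprim with ⟨hface, hl⟩ | ⟨hface, hl⟩
  · exact ⟨fun _ => hl, fun h => absurd hface h⟩
  · exact ⟨fun h => absurd h hface, fun _ => hl⟩
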